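/- arXiv:0810.0345 — 11 statements merged into one kernel-verified Lean document; each statement's English description precedes it below -/
import Mathlib

section
/- Let G be a group and let Cyc(G) = {x ∈ G : ⟨x,y⟩ is cyclic for all y ∈ G}. If x, y ∈ G are such that the image of ⟨x,y⟩ in G/Cyc(G) is cyclic, then ⟨x,y⟩ is cyclic in G. -/
/-- The cyclicizer of a group: elements generating a cyclic subgroup with every element. -/
def cyclicizer (G : Type*) [Group G] : Set G :=
  {x | ∀ y : G, IsCyclic (Subgroup.closure {x, y} : Subgroup G)}

/-- The relative cyclicizer of an element. -/
def relCyclicizer {G : Type*} [Group G] (x : G) : Set G :=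
  {g | IsCyclic (Subgroup.closure {g, x} : Subgroup G)}

/-- A group is locally cyclic if every finitely generated subgroup is cyclic. -/
def IsLocallyCyclic (G : Type*) [Group G] : Prop :=
  ∀ H : Subgroup G, H.FG → IsCyclic H

/-- The non-cyclic graph of a group. -/
def noncyclicGraph (G : Type*) [Group G] :
    SimpleGraph {g : G // g ∉ cyclicizer G} where
  Adj x y := x ≠ y ∧ ¬ IsCyclic (Subgroup.closure {(x : G), (y : G)} : Subgroup G)
  symm := ⟨fun x y h => ⟨h.1.symm, by rw [Set.pair_comm]; exact h.2⟩⟩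
  loopless := ⟨fun x h => h.1 rfl⟩

/-- The cyclic graph of a group (complement of the non-cyclic graph). -/
def cyclicGraph (G : Type*) [Group G] :
    SimpleGraph {g : G // g ∉ cyclicizer G} where
  Adj x y := x ≠ y ∧ IsCyclic (Subgroup.closure {(x : G), (y : G)} : Subgroup G)
  symm := ⟨fun x y h => ⟨h.1.symm, by rw [Set.pair_comm]; exact h.2⟩⟩
  loopless := ⟨fun x h => h.1 rfl⟩

/-- A graph has clique number `n` if it has a clique of size `n` and no larger clique. -/
def hasCliqueNum {V : Type*} (Γ : SimpleGraph V) (n : ℕ) : Prop :=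
  (∃ s : Finset V, Γ.IsNClique n s) ∧ ∀ s : Finset V, Γ.IsClique (s : Set V) → s.card ≤ n

/-! Write `x̄ = z̄ ^ i` and `ȳ = z̄ ^ j` in `G ⧸ Cyc(G)`, so that `x = z ^ i u` and `y = z ^ j v`
with `u, v ∈ Cyc(G)`. Adjoining an element of `Cyc(G)` to a cyclic subgroup `⟨z⟩` keeps it cyclic,
since `⟨z, u⟩` is cyclic by definition of `Cyc(G)`; doing this twice shows that `⟨z, u, v⟩`,
which contains `x` and `y`, is cyclic. -/

open Subgroup

section

variable {G : Type*} [Group G]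

theorem isCyclic_sup_zpowers_of_mem_cyclicizer {H : Subgroup G} [hH : IsCyclic H] {u : G}
    (hu : u ∈ cyclicizer G) : IsCyclic ↥(H ⊔ zpowers u) := by
  obtain ⟨z, rfl⟩ := H.isCyclic_iff_exists_zpowers_eq_top.mp hH
  rw [zpowers_eq_closure, zpowers_eq_closure, ← Subgroup.closure_union, Set.singleton_union,
    Set.pair_comm]
  exact hu z

theorem QuotientGroup.exists_zpow_inv_mul_mem_of_mk_mem_zpowers {N : Subgroup G} [N.Normal]
    {x z : G} (h : (x : G ⧸ N) ∈ zpowers (z : G ⧸ N)) : ∃ i : ℤ, (z ^ i)⁻¹ * x ∈ N := by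
  obtain ⟨i, hi⟩ := h
  exact ⟨i, QuotientGroup.eq.mp (by simpa using hi)⟩

theorem mem_zpowers_sup_zpowers_zpow_inv_mul (z x : G) (i : ℤ) :
    x ∈ zpowers z ⊔ zpowers ((z ^ i)⁻¹ * x) := by
  simpa using mul_mem (mem_sup_left (zpow_mem_zpowers z i))
    (mem_sup_right (mem_zpowers ((z ^ i)⁻¹ * x)))

end

theorem cyclic_of_cyclic_image_in_quotient_by_cyclicizer
    {G : Type*} [Group G] (N : Subgroup G) [N.Normal]
    (hN : (N : Set G) = cyclicizer G) (x y : G)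
    (h : IsCyclic (Subgroup.closure {(x : G ⧸ N), (y : G ⧸ N)} : Subgroup (G ⧸ N))) :
    IsCyclic (Subgroup.closure {x, y} : Subgroup G) := by
  obtain ⟨ζ, hζ⟩ := (Subgroup.closure _).isCyclic_iff_exists_zpowers_eq_top.mp h
  obtain ⟨z, rfl⟩ := QuotientGroup.mk_surjective ζ
  obtain ⟨i, hi⟩ := QuotientGroup.exists_zpow_inv_mul_mem_of_mk_mem_zpowers
    (hζ ▸ Subgroup.subset_closure (by simp) : (x : G ⧸ N) ∈ _)
  obtain ⟨j, hj⟩ := QuotientGroup.exists_zpow_inv_mul_mem_of_mk_mem_zpowers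
    (hζ ▸ Subgroup.subset_closure (by simp) : (y : G ⧸ N) ∈ _)
  set u := (z ^ i)⁻¹ * x
  set v := (z ^ j)⁻¹ * y
  have : IsCyclic ↥(zpowers z ⊔ zpowers u) :=
    isCyclic_sup_zpowers_of_mem_cyclicizer (hN.subset hi)
  have : IsCyclic ↥(zpowers z ⊔ zpowers u ⊔ zpowers v) :=
    isCyclic_sup_zpowers_of_mem_cyclicizer (hN.subset hj)
  refine isCyclic_of_le (H' := zpowers z ⊔ zpowers u ⊔ zpowers v)
    (Subgroup.closure_le _ |>.mpr (Set.pair_subset ?_ ?_))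
  · exact mem_sup_left (mem_zpowers_sup_zpowers_zpow_inv_mul z x i)
  · exact (sup_le_sup_right le_sup_left (zpowers v) : zpowers z ⊔ zpowers v ≤ _)
      (mem_zpowers_sup_zpowers_zpow_inv_mul z y j)
end

section
/- If G is a group that is not locally cyclic, then there exist two elements x, y ∈ G such that no two of the three elements x, y, xy generate a cyclic subgroup pairwise; i.e., ⟨x,y⟩, ⟨x,xy⟩, and ⟨y,xy⟩ are all non-cyclic. (Hence the non-cyclic graph of G has clique number at least 3.) -/
/-!
If every two elements of `G` generated a cyclic subgroup, then by induction on a finite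
generating set every finitely generated subgroup would be cyclic, since
`⟨a, S⟩ = ⟨a, c⟩` once `⟨S⟩ = ⟨c⟩`. So some `⟨x, y⟩` is not cyclic, and the pairs
`{x, xy}` and `{y, xy}` generate the same subgroup `⟨x, y⟩`.
-/

theorem isLocallyCyclic_of_forall_isCyclic_closure_pair {G : Type*} [Group G]
    (h : ∀ x y : G, IsCyclic (Subgroup.closure {x, y})) : IsLocallyCyclic G := by
  classical
  rintro H ⟨S, rfl⟩
  induction S using Finset.induction_on with
  | empty => rw [Finset.coe_empty, Subgroup.closure_empty]; infer_instance
  | insert a S _ ih =>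
    obtain ⟨c, hc⟩ := (Subgroup.isCyclic_iff_exists_zpowers_eq_top _).1 ih
    have : Subgroup.closure (insert a S : Finset G) = Subgroup.closure {a, c} := by
      rw [Finset.coe_insert, Set.insert_eq, Subgroup.closure_union, ← hc,
        Subgroup.zpowers_eq_closure, ← Subgroup.closure_union, ← Set.insert_eq]
    rw [this]
    exact h a c

namespace Subgroup

variable {G : Type*} [Group G]

theorem closure_pair_fst_mul (x y : G) : closure {x, x * y} = closure {x, y} := by
  have hx : x ∈ closure {x, y} := subset_closure (by simp)
  have hy : y ∈ closure {x, y} := subset_closure (by simp)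
  have hx' : x ∈ closure {x, x * y} := subset_closure (by simp)
  have hxy' : x * y ∈ closure {x, x * y} := subset_closure (by simp)
  refine le_antisymm ((closure_le _).2 (Set.pair_subset hx (mul_mem hx hy)))
    ((closure_le _).2 (Set.pair_subset hx' ?_))
  simpa using mul_mem (inv_mem hx') hxy'

theorem closure_pair_snd_mul (x y : G) : closure {y, x * y} = closure {x, y} := by
  have hx : x ∈ closure {x, y} := subset_closure (by simp)
  have hy : y ∈ closure {x, y} := subset_closure (by simp)
  have hy' : y ∈ closure {y, x * y} := subset_closure (by simp)
  have hxy' : x * y ∈ closure {y, x * y} := subset_closure (by simp)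
  refine le_antisymm ((closure_le _).2 (Set.pair_subset hy (mul_mem hx hy)))
    ((closure_le _).2 (Set.pair_subset ?_ hy'))
  simpa using mul_mem hxy' (inv_mem hy')

end Subgroup

theorem exists_triangle_of_not_locallyCyclic
    {G : Type*} [Group G] (h : ¬ IsLocallyCyclic G) :
    ∃ x y : G, ¬ IsCyclic (Subgroup.closure {x, y} : Subgroup G) ∧
      ¬ IsCyclic (Subgroup.closure {x, x * y} : Subgroup G) ∧
      ¬ IsCyclic (Subgroup.closure {y, x * y} : Subgroup G) := by
  obtain ⟨x, y, hxy⟩ : ∃ x y : G, ¬ IsCyclic (Subgroup.closure {x, y}) := by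
    by_contra! hcyc
    exact h (isLocallyCyclic_of_forall_isCyclic_closure_pair hcyc)
  exact ⟨x, y, hxy, Subgroup.closure_pair_fst_mul x y ▸ hxy,
    Subgroup.closure_pair_snd_mul x y ▸ hxy⟩
end

section
/- Let G be a finite non-cyclic p-group (p prime). Then the cyclic graph of G is disconnected: there exist two vertices in G \ Cyc(G) that cannot be joined by a path, where vertices are elements of G \ Cyc(G) and two distinct vertices are adjacent iff they generate a cyclic subgroup. -/
/-!
In a finite `p`-group the orders of elements are totally ordered by divisibility, and inside a
finite cyclic group `x ∈ ⟨y⟩` as soon as `ord x ∣ ord y`. Let `n` be the least order for which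
there are two distinct cyclic subgroups `⟨a⟩ ≠ ⟨b⟩` of order `n`; it exists because `G` is not
cyclic. An element of order `< n` generates the only cyclic subgroup of its order, which lies in
every larger cyclic subgroup, so it belongs to `Cyc(G)`: every vertex has order divisible by `n`.
Hence along an edge `u — v` (with `⟨u, v⟩` cyclic) `a ∈ ⟨u⟩` forces `a ∈ ⟨v⟩`, so every vertex
reachable from `a` contains `a` in its cyclic subgroup, and `b` does not.
-/

open Subgroup

section Cyclic

variable {G : Type*} [Group G]

theorem IsCyclic.mem_zpowers_of_orderOf_dvd [Finite G] [IsCyclic G] {x y : G}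
    (h : orderOf x ∣ orderOf y) : x ∈ zpowers y := by
  classical
  have := Fintype.ofFinite G
  -- a cyclic group has at most `d` solutions of `z ^ d = 1`, and `zpowers y` already supplies `d`
  let S : Finset G := {z | z ^ orderOf y = 1}
  have hsub : (zpowers y : Set G).toFinset ⊆ S := fun z hz => by
    simp only [Set.mem_toFinset, SetLike.mem_coe] at hz
    simpa [S] using orderOf_dvd_iff_pow_eq_one.mp (orderOf_dvd_of_mem_zpowers hz)
  have hcard : S.card ≤ (zpowers y : Set G).toFinset.card := by
    rw [Set.toFinset_card, ← Nat.card_eq_fintype_card, SetLike.coe_sort_coe, Nat.card_zpowers]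
    convert IsCyclic.card_pow_eq_one_le (α := G) (orderOf_pos y)
  have hx : x ∈ S := by simpa [S] using orderOf_dvd_iff_pow_eq_one.mp h
  rw [← Finset.eq_of_subset_of_card_le hsub hcard] at hx
  simpa using hx

theorem Subgroup.mem_zpowers_of_orderOf_dvd [Finite G] {H : Subgroup G} [IsCyclic H]
    {x y : G} (hx : x ∈ H) (hy : y ∈ H) (h : orderOf x ∣ orderOf y) : x ∈ zpowers y := by
  have hH : (⟨x, hx⟩ : H) ∈ zpowers (⟨y, hy⟩ : H) :=
    IsCyclic.mem_zpowers_of_orderOf_dvd (by simpa only [Subgroup.orderOf_mk] using h)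
  simpa [MonoidHom.map_zpowers] using Subgroup.mem_map_of_mem H.subtype hH

theorem zpowers_eq_of_mem_of_orderOf_eq [Finite G] {x y : G} (hx : x ∈ zpowers y)
    (h : orderOf x = orderOf y) : zpowers x = zpowers y :=
  Subgroup.eq_of_le_of_card_ge (zpowers_le_of_mem hx) (by simp [Nat.card_zpowers, h])

theorem isCyclic_closure_pair_of_mem_zpowers {x y : G} (h : x ∈ zpowers y) :
    IsCyclic (closure {x, y} : Subgroup G) := by
  have hclosure : closure {x, y} = zpowers y :=
    le_antisymm (closure_le _ |>.mpr <| Set.insert_subset h <| by simp)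
        (zpowers_le_of_mem <| subset_closure <| by simp)
  rw [hclosure]
  infer_instance

theorem not_isCyclic_closure_pair_of_zpowers_ne [Finite G] {x y : G}
    (h : orderOf x = orderOf y) (hne : zpowers x ≠ zpowers y) :
    ¬ IsCyclic (closure {x, y} : Subgroup G) := fun _ =>
  hne <| zpowers_eq_of_mem_of_orderOf_eq
    (Subgroup.mem_zpowers_of_orderOf_dvd (H := closure {x, y}) (subset_closure (by simp))
      (subset_closure (by simp)) h.dvd) h

theorem mem_zpowers_of_forall_orderOf_eq {x y : G} (hy : orderOf y ≠ 0)
    (h : orderOf x ∣ orderOf y) (huniq : ∀ z : G, orderOf z = orderOf x → zpowers z = zpowers x) :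
    x ∈ zpowers y := by
  have hz : zpowers (y ^ (orderOf y / orderOf x)) = zpowers x :=
    huniq _ (orderOf_pow_orderOf_div hy h)
  exact zpowers_le_of_mem (pow_mem (mem_zpowers y) _) (hz ▸ mem_zpowers x)

end Cyclic

namespace IsPGroup

variable {p : ℕ} [Fact p.Prime] {G : Type*} [Group G]

theorem orderOf_dvd_of_le (hG : IsPGroup p G) {x y : G} (h : orderOf x ≤ orderOf y) :
    orderOf x ∣ orderOf y := by
  obtain ⟨i, hi⟩ := IsPGroup.iff_orderOf.mp hG x
  obtain ⟨j, hj⟩ := IsPGroup.iff_orderOf.mp hG y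
  rw [hi, hj] at h ⊢
  exact pow_dvd_pow p ((Nat.pow_le_pow_iff_right (Fact.out : p.Prime).one_lt).mp h)

theorem exists_zpowers_ne_of_not_isCyclic [Finite G] (hG : IsPGroup p G) (hc : ¬ IsCyclic G) :
    ∃ a b : G, orderOf a = orderOf b ∧ zpowers a ≠ zpowers b := by
  by_contra! huniq
  obtain ⟨g, hg⟩ := Finite.exists_max (orderOf : G → ℕ)
  exact hc ⟨g, fun x => mem_zpowers_of_forall_orderOf_eq (orderOf_pos g).ne'
    (hG.orderOf_dvd_of_le (hg x)) fun z hz => huniq z x hz⟩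

theorem exists_zpowers_ne_of_not_isCyclic_minimal [Finite G] (hG : IsPGroup p G)
    (hc : ¬ IsCyclic G) :
    ∃ a b : G, orderOf a = orderOf b ∧ zpowers a ≠ zpowers b ∧
      ∀ x y : G, orderOf x = orderOf y → orderOf x < orderOf a → zpowers x = zpowers y := by
  classical
  have hex : ∃ n, ∃ a b : G, orderOf a = n ∧ orderOf b = n ∧ zpowers a ≠ zpowers b := by
    obtain ⟨a, b, hab, hne⟩ := hG.exists_zpowers_ne_of_not_isCyclic hc
    exact ⟨_, a, b, rfl, hab.symm, hne⟩
  obtain ⟨a, b, ha, hb, hne⟩ := Nat.find_spec hex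
  refine ⟨a, b, ha.trans hb.symm, hne, fun x y hxy hx => ?_⟩
  by_contra hne'
  exact Nat.find_min hex (ha ▸ hx) ⟨x, y, rfl, hxy.symm, hne'⟩

theorem mem_cyclicizer_of_orderOf_lt [Finite G] (hG : IsPGroup p G) {n : ℕ}
    (huniq : ∀ x y : G, orderOf x = orderOf y → orderOf x < n → zpowers x = zpowers y)
    {x : G} (hx : orderOf x < n) : x ∈ cyclicizer G := by
  intro y
  rcases le_total (orderOf x) (orderOf y) with hle | hle
  · exact isCyclic_closure_pair_of_mem_zpowers <| mem_zpowers_of_forall_orderOf_eq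
      (orderOf_pos y).ne' (hG.orderOf_dvd_of_le hle) fun z hz => huniq z x hz (hz ▸ hx)
  · rw [Set.pair_comm]
    exact isCyclic_closure_pair_of_mem_zpowers <| mem_zpowers_of_forall_orderOf_eq
      (orderOf_pos x).ne' (hG.orderOf_dvd_of_le hle)
      fun z hz => huniq z y hz (hz ▸ hle.trans_lt hx)

end IsPGroup

theorem mem_zpowers_of_cyclicGraph_reachable {G : Type*} [Group G] [Finite G] {a : G}
    (hdvd : ∀ g ∉ cyclicizer G, orderOf a ∣ orderOf g) {u v : {g : G // g ∉ cyclicizer G}}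
    (h : (cyclicGraph G).Reachable u v) (ha : a ∈ zpowers (u : G)) : a ∈ zpowers (v : G) := by
  obtain ⟨w⟩ := h
  induction w with
  | nil => exact ha
  | @cons u v _ hadj _ ih =>
    have : IsCyclic (closure {(u : G), (v : G)}) := hadj.2
    exact ih <| Subgroup.mem_zpowers_of_orderOf_dvd (H := closure {(u : G), (v : G)})
      (zpowers_le_of_mem (subset_closure (by simp)) ha) (subset_closure (by simp)) (hdvd v v.2)

theorem cyclicGraph_disconnected_of_pGroup
    {G : Type*} [Group G] [Finite G] (p : ℕ) (hp : p.Prime)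
    (hpg : IsPGroup p G) (hG : ¬ IsCyclic G) :
    ∃ v w : {g : G // g ∉ cyclicizer G}, ¬ (cyclicGraph G).Reachable v w := by
  have : Fact p.Prime := ⟨hp⟩
  obtain ⟨a, b, hab, hne, hmin⟩ := hpg.exists_zpowers_ne_of_not_isCyclic_minimal hG
  have hdvd : ∀ g ∉ cyclicizer G, orderOf a ∣ orderOf g := fun g hg =>
    hpg.orderOf_dvd_of_le <| not_lt.mp fun hlt => hg (hpg.mem_cyclicizer_of_orderOf_lt hmin hlt)
  have hnc := not_isCyclic_closure_pair_of_zpowers_ne hab hne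
  refine ⟨⟨a, fun h => hnc (h b)⟩, ⟨b, fun h => hnc (Set.pair_comm a b ▸ h a)⟩,
    fun hreach => hne ?_⟩
  exact zpowers_eq_of_mem_of_orderOf_eq
    (mem_zpowers_of_cyclicGraph_reachable hdvd hreach (mem_zpowers a)) hab
end

section
/- Let G be a non-locally-cyclic group. The non-cyclic graph of G has a dominating set of size 1 if and only if Cyc(G) = 1 and there exists an element x of order 2 with Cyc_G(x) = ⟨x⟩. -/
/-! If `v` dominates, every element of `Cyc_G(v)` outside `Cyc(G)` equals `v`. As `Cyc(G)` is a
subgroup, for `c ∈ Cyc(G)` both `v * c` and `v⁻¹` are such elements, forcing `c = 1` and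
`v⁻¹ = v`; then `Cyc_G(v) ⊆ Cyc(G) ∪ {v} = ⟨v⟩`. Conversely, if `Cyc(G) = 1` and
`Cyc_G(x) = ⟨x⟩ = {1, x}`, then `x` is adjacent to every vertex other than itself. -/

section

open Subgroup

variable {G : Type*} [Group G]

theorem isCyclic_closure_pair_iff {a b : G} :
    IsCyclic (closure {a, b} : Subgroup G) ↔ ∃ z : G, a ∈ zpowers z ∧ b ∈ zpowers z := by
  constructor
  · intro hcyc
    obtain ⟨z, hz⟩ := (closure {a, b}).isCyclic_iff_exists_zpowers_eq_top.mp hcyc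
    exact ⟨z, hz ▸ subset_closure (by simp), hz ▸ subset_closure (by simp)⟩
  · rintro ⟨z, ha, hb⟩
    have hle : closure {a, b} ≤ zpowers z := by
      rw [closure_le]
      rintro g (rfl | rfl) <;> assumption
    exact isCyclic_of_le hle

theorem mem_relCyclicizer_iff {x g : G} :
    g ∈ relCyclicizer x ↔ IsCyclic (closure {x, g} : Subgroup G) := by
  rw [Set.pair_comm]
  rfl

theorem zpowers_subset_relCyclicizer (x : G) : (zpowers x : Set G) ⊆ relCyclicizer x :=
  fun _ hg => isCyclic_closure_pair_iff.mpr ⟨x, hg, mem_zpowers x⟩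

variable (G) in
def cyclicizerSubgroup : Subgroup G where
  carrier := cyclicizer G
  one_mem' y := isCyclic_closure_pair_iff.mpr ⟨y, one_mem _, mem_zpowers y⟩
  mul_mem' {a b} ha hb y := by
    obtain ⟨z, hbz, hyz⟩ := isCyclic_closure_pair_iff.mp (hb y)
    obtain ⟨w, haw, hzw⟩ := isCyclic_closure_pair_iff.mp (ha z)
    replace hzw : zpowers z ≤ zpowers w := zpowers_le.mpr hzw
    exact isCyclic_closure_pair_iff.mpr ⟨w, mul_mem haw (hzw hbz), hzw hyz⟩
  inv_mem' {a} ha y := by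
    obtain ⟨z, haz, hyz⟩ := isCyclic_closure_pair_iff.mp (ha y)
    exact isCyclic_closure_pair_iff.mpr ⟨z, inv_mem haz, hyz⟩

theorem zpowers_eq_pair_of_orderOf_eq_two {x : G} (hx : orderOf x = 2) :
    (zpowers x : Set G) = {1, x} := by
  ext g
  constructor
  · intro hg
    obtain ⟨m, rfl⟩ := mem_zpowers_iff.mp hg
    rw [← zpow_mod_orderOf, hx]
    rcases Int.emod_two_eq m with h0 | h1
    · simp [h0]
    · simp [h1]
  · rintro (rfl | rfl)
    exacts [one_mem _, mem_zpowers _]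

theorem noncyclicGraph_dominates_iff (v : {g : G // g ∉ cyclicizer G}) :
    (∀ w, w = v ∨ (noncyclicGraph G).Adj v w) ↔
      relCyclicizer (v : G) \ cyclicizer G ⊆ {(v : G)} := by
  constructor
  · rintro hv g ⟨hgv, hg⟩
    rcases hv ⟨g, hg⟩ with rfl | hadj
    · rfl
    · exact absurd (mem_relCyclicizer_iff.mp hgv) hadj.2
  · intro hv w
    by_cases hcyc : IsCyclic (closure {(v : G), (w : G)} : Subgroup G)
    · exact .inl (Subtype.ext (hv ⟨mem_relCyclicizer_iff.mpr hcyc, w.2⟩))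
    · refine .inr ⟨fun hvw => hcyc ?_, hcyc⟩
      rw [← hvw, Set.pair_eq_singleton, ← zpowers_eq_closure]
      infer_instance

section Dominating

variable {v : G} (hv : v ∉ cyclicizer G) (hdom : relCyclicizer v \ cyclicizer G ⊆ {v})
include hv hdom

theorem cyclicizer_eq_one_of_dominates : cyclicizer G = {1} := by
  refine Set.eq_singleton_iff_unique_mem.mpr ⟨one_mem (cyclicizerSubgroup G), fun c hc => ?_⟩
  obtain ⟨z, hcz, hvz⟩ := isCyclic_closure_pair_iff.mp (hc v)
  have hvc_rel : v * c ∈ relCyclicizer v :=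
    isCyclic_closure_pair_iff.mpr ⟨z, mul_mem hvz hcz, hvz⟩
  have hvc : v * c ∉ cyclicizer G :=
    (mul_mem_cancel_right (H := cyclicizerSubgroup G) hc).not.mpr hv
  simpa using hdom ⟨hvc_rel, hvc⟩

theorem orderOf_eq_two_of_dominates : orderOf v = 2 := by
  have hinv : v⁻¹ = v := hdom
    ⟨zpowers_subset_relCyclicizer v (inv_mem (mem_zpowers v)),
      (inv_mem_iff (H := cyclicizerSubgroup G)).not.mpr hv⟩
  have hv1 : v ≠ 1 := fun h => hv (h ▸ one_mem (cyclicizerSubgroup G))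
  exact orderOf_eq_prime (by rw [sq]; nth_rw 1 [← hinv]; exact inv_mul_cancel v) hv1

theorem relCyclicizer_eq_zpowers_of_dominates :
    relCyclicizer v = (zpowers v : Set G) := by
  refine Set.Subset.antisymm (fun g hg => ?_) (zpowers_subset_relCyclicizer v)
  by_cases hgc : g ∈ cyclicizer G
  · rw [cyclicizer_eq_one_of_dominates hv hdom] at hgc
    exact hgc ▸ one_mem _
  · exact (hdom ⟨hg, hgc⟩ : g = v) ▸ mem_zpowers v

end Dominating

end

theorem dominating_singleton_iff_general
    {G : Type*} [Group G] :
    (∃ v : {g : G // g ∉ cyclicizer G}, ∀ w, w = v ∨ (noncyclicGraph G).Adj v w) ↔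
      (cyclicizer G = {1} ∧
        ∃ x : G, orderOf x = 2 ∧ relCyclicizer x = (Subgroup.zpowers x : Set G)) := by
  simp_rw [noncyclicGraph_dominates_iff]
  constructor
  · rintro ⟨⟨v, hv⟩, hdom⟩
    exact ⟨cyclicizer_eq_one_of_dominates hv hdom, v, orderOf_eq_two_of_dominates hv hdom,
      relCyclicizer_eq_zpowers_of_dominates hv hdom⟩
  · rintro ⟨hcyc, x, hx2, hrel⟩
    have hx1 : x ≠ 1 := by rintro rfl; simp at hx2
    refine ⟨⟨x, by simpa [hcyc]⟩, fun g ⟨hg, hgc⟩ => ?_⟩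
    rw [hrel, zpowers_eq_pair_of_orderOf_eq_two hx2] at hg
    rw [hcyc] at hgc
    rcases hg with rfl | rfl
    exacts [absurd rfl hgc, rfl]

theorem dominating_singleton_iff
    {G : Type*} [Group G] (h : ¬ IsLocallyCyclic G) :
    (∃ v : {g : G // g ∉ cyclicizer G}, ∀ w, w = v ∨ (noncyclicGraph G).Adj v w) ↔
      (cyclicizer G = {1} ∧
        ∃ x : G, orderOf x = 2 ∧ relCyclicizer x = (Subgroup.zpowers x : Set G)) :=
  dominating_singleton_iff_general
end

section
/- Let G be a finite group with Cyc(G) = 1 and let p be a prime dividing |G|. Then the number ν_p(G) of subgroups of order p in G is at most the clique number of the non-cyclic graph of G. -/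
/-! Send each subgroup of order `p` to a generator. The generators are nontrivial, hence vertices
of the non-cyclic graph since `Cyc(G) = 1`, and two generators of distinct subgroups cannot lie in
a common cyclic subgroup, because a finite cyclic group has at most one subgroup of each order.
So the generators form a clique. -/

open Subgroup

theorem IsCyclic.subgroup_eq_of_card_eq {C : Type*} [Group C] [Finite C] [IsCyclic C]
    {H K : Subgroup C} (hcard : Nat.card H = Nat.card K) : H = K := by
  classical
  have : Fintype C := Fintype.ofFinite C
  -- A cyclic group has at most `n` solutions of `a ^ n = 1`, and every subgroup of order `n`
  -- already provides `n` of them.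
  set S : Finset C := {a | a ^ Nat.card K = 1}
  have hS : S.card ≤ Nat.card K := IsCyclic.card_pow_eq_one_le Nat.card_pos
  have hsub : ∀ L : Subgroup C, Nat.card L = Nat.card K → (L : Set C).toFinset ⊆ S := by
    intro L hL a ha
    rw [Set.mem_toFinset] at ha
    rw [Finset.mem_filter_univ, ← hL, ← L.coe_mk a ha, ← L.coe_pow, pow_card_eq_one', L.coe_one]
  have hKS : (K : Set C).toFinset = S :=
    Finset.eq_of_subset_of_card_le (hsub K rfl)
      (by rwa [Set.toFinset_card, ← Nat.card_eq_fintype_card])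
  have hle : H ≤ K := fun a ha => by
    simpa [← hKS] using hsub H hcard (Set.mem_toFinset.mpr ha)
  exact eq_of_le_of_card_ge hle hcard.ge

theorem zpowers_eq_zpowers_of_isCyclic_closure {G : Type*} [Group G] [Finite G] {x y : G}
    (hord : orderOf x = orderOf y) (hcyc : IsCyclic (closure {x, y} : Subgroup G)) :
    zpowers x = zpowers y := by
  set C := closure ({x, y} : Set G)
  let x' : C := ⟨x, subset_closure (by simp)⟩
  let y' : C := ⟨y, subset_closure (by simp)⟩
  have hC : zpowers x' = zpowers y' :=
    IsCyclic.subgroup_eq_of_card_eq (by simpa [Nat.card_zpowers, x', y'] using hord)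
  simpa [MonoidHom.map_zpowers, x', y'] using congrArg (map C.subtype) hC

theorem noncyclicGraph_adj_of_orderOf_eq {G : Type*} [Group G] [Finite G]
    {x y : {g : G // g ∉ cyclicizer G}} (hord : orderOf (x : G) = orderOf (y : G))
    (hne : zpowers (x : G) ≠ zpowers (y : G)) : (noncyclicGraph G).Adj x y :=
  ⟨fun h => hne (h ▸ rfl), fun hcyc => hne (zpowers_eq_zpowers_of_isCyclic_closure hord hcyc)⟩

theorem hasCliqueNum.card_le_of_isClique_range {V ι : Type*} [Finite ι] {Γ : SimpleGraph V}
    {n : ℕ} (hω : hasCliqueNum Γ n) {f : ι → V} (hf : Function.Injective f)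
    (hclique : Γ.IsClique (Set.range f)) : Nat.card ι ≤ n := by
  classical
  have : Fintype ι := Fintype.ofFinite ι
  simpa [Nat.card_eq_fintype_card] using hω.2 (Finset.univ.map ⟨f, hf⟩) (by simpa using hclique)

theorem nu_p_le_cliqueNum_general
    {G : Type*} [Group G] [Finite G] (hcyc : cyclicizer G = {1})
    (p : ℕ) (hp : p.Prime)
    (n : ℕ) (hω : hasCliqueNum (noncyclicGraph G) n) :
    Nat.card {H : Subgroup G // Nat.card H = p} ≤ n := by
  have : Fact p.Prime := ⟨hp⟩
  choose g hg using fun H : {H : Subgroup G // Nat.card H = p} =>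
    H.1.isCyclic_iff_exists_zpowers_eq_top.mp (isCyclic_of_prime_card H.2)
  have horder (H) : orderOf (g H) = p := by rw [← Nat.card_zpowers, hg]; exact H.2
  have hvertex (H) : g H ∉ cyclicizer G := by
    rw [hcyc, Set.mem_singleton_iff]
    intro h
    exact hp.one_lt.ne' (by rw [← horder H, h, orderOf_one])
  let f (H) : {g : G // g ∉ cyclicizer G} := ⟨g H, hvertex H⟩
  have hzpowers (H) : zpowers (f H : G) = H.1 := hg H
  refine hω.card_le_of_isClique_range (f := f) (fun H K hHK => ?_) ?_
  · exact Subtype.ext (by rw [← hzpowers, hHK, hzpowers])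
  · rintro _ ⟨H, rfl⟩ _ ⟨K, rfl⟩ hHK
    refine noncyclicGraph_adj_of_orderOf_eq (by rw [horder, horder]) ?_
    rw [hzpowers, hzpowers]
    exact fun h => hHK (congrArg f (Subtype.ext h))

theorem nu_p_le_cliqueNum
    {G : Type*} [Group G] [Finite G] (hcyc : cyclicizer G = {1})
    (p : ℕ) (hp : p.Prime) (hdvd : p ∣ Nat.card G)
    (n : ℕ) (hω : hasCliqueNum (noncyclicGraph G) n) :
    Nat.card {H : Subgroup G // Nat.card H = p} ≤ n :=
  nu_p_le_cliqueNum_general hcyc p hp n hω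
end

section
/- Let G be a finite group with Cyc(G) = 1, and let p_1, ..., p_k be distinct primes such that G has no element of order p_i·p_j for any i ≠ j. Then ν_{p_1}(G) + ... + ν_{p_k}(G) ≤ ω(C_G), where ν_p(G) is the number of subgroups of order p and ω(C_G) is the clique number of the non-cyclic graph of G. -/
/-!
Pick a generator of every subgroup of order `p i`. If two of these generators `x`, `y` generated a
cyclic subgroup, they would commute; for distinct primes `x * y` would then have order `p i * p j`,
and for equal primes `⟨x⟩` and `⟨y⟩` would be subgroups of the same order of the cyclic group
`⟨x, y⟩`, hence equal. So the generators (none of which is `1`, the only element of `Cyc(G)`) are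
pairwise adjacent in the non-cyclic graph, and they form a clique of size `∑ i, ν_{p i}(G)`.
-/

open Subgroup

theorem IsCyclic.zpowers_eq_of_orderOf_eq {α : Type*} [Group α] [Finite α] [IsCyclic α]
    {x y : α} (h : orderOf x = orderOf y) : zpowers x = zpowers y := by
  classical
  have := Fintype.ofFinite α
  have hsub : (zpowers x : Set α).toFinset ⊆ ({a | a ^ orderOf x = 1} : Finset α) := by
    intro a ha
    simpa using orderOf_dvd_iff_pow_eq_one.mp (orderOf_dvd_of_mem_zpowers (Set.mem_toFinset.mp ha))
  -- a cyclic group has at most `n` solutions of `a ^ n = 1`, and `zpowers x` already supplies `n`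
  have heq := Finset.eq_of_subset_of_card_le hsub <| by
    rw [Set.toFinset_card, ← Nat.card_eq_fintype_card, SetLike.coe_sort_coe, Nat.card_zpowers]
    exact IsCyclic.card_pow_eq_one_le (orderOf_pos x)
  have hy : y ∈ zpowers x := by
    have : y ∈ ({a | a ^ orderOf x = 1} : Finset α) := by simp [h, pow_orderOf_eq_one]
    rwa [← heq, Set.mem_toFinset] at this
  exact (eq_of_le_of_card_ge (zpowers_le.mpr hy) (by rw [Nat.card_zpowers, Nat.card_zpowers, h])).symm

section ClosurePair

variable {G : Type*} [Group G] {x y : G}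

theorem zpowers_eq_of_isCyclic_closure_pair [Finite G]
    (hC : IsCyclic (closure {x, y})) (h : orderOf x = orderOf y) : zpowers x = zpowers y := by
  have hx : x ∈ closure {x, y} := subset_closure (Set.mem_insert _ _)
  have hy : y ∈ closure {x, y} := subset_closure (Set.mem_insert_of_mem _ rfl)
  have := IsCyclic.zpowers_eq_of_orderOf_eq (x := (⟨x, hx⟩ : closure {x, y})) (y := ⟨y, hy⟩)
    (by simpa only [Subgroup.orderOf_mk] using h)
  simpa [MonoidHom.map_zpowers] using congrArg (map (closure {x, y}).subtype) this

theorem commute_of_isCyclic_closure_pair (hC : IsCyclic (closure {x, y})) : Commute x y := by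
  have hx : x ∈ closure {x, y} := subset_closure (Set.mem_insert _ _)
  have hy : y ∈ closure {x, y} := subset_closure (Set.mem_insert_of_mem _ rfl)
  exact congrArg Subtype.val (IsMulCommutative.is_comm.comm (⟨x, hx⟩ : closure {x, y}) ⟨y, hy⟩)

theorem orderOf_mul_of_isCyclic_closure_pair (hC : IsCyclic (closure {x, y}))
    (h : (orderOf x).Coprime (orderOf y)) : orderOf (x * y) = orderOf x * orderOf y :=
  (commute_of_isCyclic_closure_pair hC).orderOf_mul_eq_mul_orderOf_of_coprime h

end ClosurePair

theorem noncyclicGraph_adj_of_not_isCyclic {G : Type*} [Group G]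
    {x y : {g : G // g ∉ cyclicizer G}} (h : ¬ IsCyclic (closure {(x : G), (y : G)})) :
    (noncyclicGraph G).Adj x y := by
  refine ⟨?_, h⟩
  rintro rfl
  rw [Set.pair_eq_singleton, ← zpowers_eq_closure] at h
  exact h inferInstance

theorem hasCliqueNum.card_le_of_pairwise_adj {V ι : Type*} [Finite ι] {Γ : SimpleGraph V} {n : ℕ}
    (hΓ : hasCliqueNum Γ n) (f : ι → V) (hf : Pairwise fun s t => Γ.Adj (f s) (f t)) :
    Nat.card ι ≤ n := by
  classical
  have := Fintype.ofFinite ι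
  have hinj : f.Injective := fun s t hst => by_contra fun hne => (hf hne).ne hst
  have hclique : Γ.IsClique (Finset.univ.image f : Set V) := by
    simp only [Finset.coe_image, Finset.coe_univ, Set.image_univ]
    rintro _ ⟨s, rfl⟩ _ ⟨t, rfl⟩ hst
    exact hf (ne_of_apply_ne f hst)
  simpa [Finset.card_image_of_injective _ hinj] using hΓ.2 _ hclique

theorem sum_nu_p_le_cliqueNum
    {G : Type*} [Group G] [Finite G] (hcyc : cyclicizer G = {1})
    (k : ℕ) (p : Fin k → ℕ) (hp : ∀ i, (p i).Prime)
    (hinj : Function.Injective p)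
    (hnoelt : ∀ i j, i ≠ j → ∀ g : G, orderOf g ≠ p i * p j)
    (n : ℕ) (hω : hasCliqueNum (noncyclicGraph G) n) :
    ∑ i, Nat.card {H : Subgroup G // Nat.card H = p i} ≤ n := by
  have hgen (s : Σ i, {H : Subgroup G // Nat.card H = p i}) : ∃ g : G, zpowers g = s.2 :=
    have := Fact.mk (hp s.1)
    (Subgroup.isCyclic_iff_exists_zpowers_eq_top _).mp (isCyclic_of_prime_card s.2.2)
  choose g hg using hgen
  have horder s : orderOf (g s) = p s.1 := by rw [← Nat.card_zpowers, hg, s.2.2]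
  have hnot_mem s : g s ∉ cyclicizer G := by
    rw [hcyc, Set.mem_singleton_iff, ← orderOf_eq_one_iff, horder]
    exact (hp s.1).ne_one
  have heq_of_isCyclic s t (hC : IsCyclic (closure {g s, g t})) : s = t := by
    by_cases hpq : p s.1 = p t.1
    · refine Sigma.subtype_ext (hinj hpq) ?_
      rw [← hg, ← hg]
      exact zpowers_eq_of_isCyclic_closure_pair hC (by rw [horder, horder, hpq])
    · have hcop : (orderOf (g s)).Coprime (orderOf (g t)) := by
        rw [horder, horder]
        exact (Nat.coprime_primes (hp _) (hp _)).mpr hpq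
      have hmul := orderOf_mul_of_isCyclic_closure_pair hC hcop
      rw [horder, horder] at hmul
      exact absurd hmul (hnoelt _ _ (fun h => hpq (congrArg p h)) _)
  calc ∑ i, Nat.card {H : Subgroup G // Nat.card H = p i}
      = Nat.card (Σ i, {H : Subgroup G // Nat.card H = p i}) := Nat.card_sigma.symm
    _ ≤ n := hω.card_le_of_pairwise_adj (fun s => ⟨g s, hnot_mem s⟩) fun s t hst =>
        noncyclicGraph_adj_of_not_isCyclic fun hC => hst (heq_of_isCyclic s t hC)
end

section
/- Let G be a finite group with Cyc(G) = 1 whose non-cyclic graph has clique number n, and let p be a prime with p^{k-1} < n ≤ p^k. Then for every p-element x of G, x^{p^{k-1}} lies in the center Z(G). -/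
/-!
If `x ^ p ^ (k - 1)` fails to commute with some `y`, then so does every power `x ^ d` with
`0 < d < p ^ k`, since `gcd (d, p ^ m)` divides `p ^ (k - 1)` and hence `x ^ p ^ (k - 1)` is a
power of `x ^ d`. Then `x` and the `p ^ k` elements `x ^ d * y` pairwise fail to commute, and two
non-commuting elements never generate a cyclic subgroup: this is a clique of size `p ^ k + 1 > n`.
-/

open Subgroup

section Group

variable {G : Type*} [Group G]

theorem Commute.of_isCyclic_closure_pair {u v : G} (h : IsCyclic (closure ({u, v} : Set G))) :
    Commute u v :=
  have := h
  setLike_mul_comm (s := closure ({u, v} : Set G))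
    (subset_closure (by simp)) (subset_closure (by simp))

theorem notMem_cyclicizer_of_not_commute {x y : G} (h : ¬Commute x y) : x ∉ cyclicizer G :=
  fun hx ↦ h (.of_isCyclic_closure_pair (hx y))

theorem noncyclicGraph_adj_of_not_commute {u v : {g : G // g ∉ cyclicizer G}}
    (h : ¬Commute (u : G) v) : (noncyclicGraph G).Adj u v :=
  ⟨fun huv ↦ h (huv ▸ .refl _), fun hc ↦ h (.of_isCyclic_closure_pair hc)⟩

theorem card_le_of_hasCliqueNum_noncyclicGraph {n : ℕ} (hω : hasCliqueNum (noncyclicGraph G) n)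
    {ι : Type*} [Fintype ι] [Nontrivial ι] {f : ι → G}
    (hf : Pairwise fun i j ↦ ¬Commute (f i) (f j)) : Fintype.card ι ≤ n := by
  classical
  have hmem (i : ι) : f i ∉ cyclicizer G :=
    let ⟨_, hj⟩ := exists_ne i
    notMem_cyclicizer_of_not_commute (hf hj.symm)
  let g (i : ι) : {g : G // g ∉ cyclicizer G} := ⟨f i, hmem i⟩
  have hg : g.Injective := fun i j hij ↦ by
    by_contra hne
    exact hf hne (by rw [show f i = f j from congrArg Subtype.val hij])
  have hclique : (noncyclicGraph G).IsClique (Finset.univ.image g : Set _) := by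
    rintro _ hu _ hv huv
    simp only [Finset.coe_image, Finset.coe_univ, Set.image_univ, Set.mem_range] at hu hv
    obtain ⟨i, rfl⟩ := hu
    obtain ⟨j, rfl⟩ := hv
    exact noncyclicGraph_adj_of_not_commute (hf fun hij ↦ huv (hij ▸ rfl))
  simpa [Finset.card_image_of_injective _ hg] using hω.2 _ hclique

theorem Commute.mul_right_iff {a b c : G} (h : Commute a b) :
    Commute a (b * c) ↔ Commute a c :=
  ⟨fun h' ↦ by simpa using h.inv_right.mul_right h', h.mul_right⟩

theorem commute_pow_mul_pow_mul_iff {x y : G} {i j : ℕ} (hij : i ≤ j) :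
    Commute (x ^ i * y) (x ^ j * y) ↔ Commute (x ^ (j - i)) y := by
  have hj : x ^ j * y = x ^ (j - i) * (x ^ i * y) := by
    rw [← mul_assoc, ← pow_add, Nat.sub_add_cancel hij]
  rw [hj, Commute.symm_iff, (IsRightRegular.all _).commute_mul_right_iff, Commute.symm_iff,
    ((Commute.refl x).pow_pow _ _).mul_right_iff]

theorem pairwise_not_commute_of_not_commute_pow {x y : G} {N : ℕ} (hxy : ¬Commute x y)
    (h : ∀ d, 0 < d → d < N → ¬Commute (x ^ d) y) :
    Pairwise fun i j : Option (Fin N) ↦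
      ¬Commute (i.elim x fun i ↦ x ^ (i : ℕ) * y) (j.elim x fun j ↦ x ^ (j : ℕ) * y) := by
  have hx (i : ℕ) : ¬Commute x (x ^ i * y) := by
    rwa [(Commute.self_pow x i).mul_right_iff]
  have hlt {i j : ℕ} (hij : i < j) (hj : j < N) : ¬Commute (x ^ i * y) (x ^ j * y) := by
    rw [commute_pow_mul_pow_mul_iff hij.le]
    exact h _ (by omega) (by omega)
  rintro (_ | i) (_ | j) hne
  · exact (hne rfl).elim
  · exact hx j
  · exact fun hc ↦ hx i hc.symm
  · obtain hij | hji := Nat.lt_or_gt_of_ne fun e ↦ hne (congrArg some (Fin.ext e))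
    · exact hlt hij j.2
    · exact fun hc ↦ hlt hji i.2 hc.symm

theorem pow_gcd_orderOf_mem_zpowers_pow (x : G) (d : ℕ) :
    x ^ d.gcd (orderOf x) ∈ zpowers (x ^ d) := by
  refine mem_zpowers_iff.mpr ⟨d.gcdA (orderOf x), ?_⟩
  rw [← zpow_natCast, ← zpow_natCast x, Nat.gcd_eq_gcd_ab, zpow_add, zpow_mul, zpow_mul,
    zpow_natCast x (orderOf x), pow_orderOf_eq_one, one_zpow, mul_one]

theorem pow_mem_zpowers_pow_of_gcd_dvd {x : G} {d e : ℕ} (h : d.gcd (orderOf x) ∣ e) :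
    x ^ e ∈ zpowers (x ^ d) := by
  obtain ⟨c, rfl⟩ := h
  rw [pow_mul]
  exact pow_mem (pow_gcd_orderOf_mem_zpowers_pow x d) c

end Group

theorem Nat.gcd_prime_pow_dvd_of_lt {p m k d : ℕ} (hp : p.Prime) (hd : 0 < d)
    (hdk : d < p ^ (k + 1)) : d.gcd (p ^ m) ∣ p ^ k := by
  obtain ⟨v, -, hv⟩ := (Nat.dvd_prime_pow hp).mp (Nat.gcd_dvd_right d (p ^ m))
  have hvd : p ^ v < p ^ (k + 1) := hv ▸ (Nat.le_of_dvd hd (Nat.gcd_dvd_left d _)).trans_lt hdk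
  rw [hv]
  exact Nat.pow_dvd_pow p (by rwa [Nat.pow_lt_pow_iff_right hp.one_lt, Nat.lt_succ_iff] at hvd)

theorem pPow_mem_center_of_cliqueNum_between_general
    {G : Type*} [Group G]
    (n : ℕ) (hω : hasCliqueNum (noncyclicGraph G) n)
    (p k : ℕ) (hp : p.Prime) (h2 : n ≤ p ^ k)
    (x : G) (hx : ∃ m, orderOf x = p ^ m) :
    x ^ (p ^ (k - 1)) ∈ Subgroup.center G := by
  obtain ⟨m, hm⟩ := hx
  by_contra hz
  obtain ⟨y, hy⟩ : ∃ y, ¬Commute (x ^ p ^ (k - 1)) y := by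
    simpa [mem_center_iff, Commute, SemiconjBy, eq_comm] using hz
  have hsmall (d : ℕ) (hd : 0 < d) (hdN : d < p ^ (k - 1 + 1)) : ¬Commute (x ^ d) y := by
    intro hc
    obtain ⟨z, hxz⟩ := mem_zpowers_iff.mp <|
      pow_mem_zpowers_pow_of_gcd_dvd (hm ▸ Nat.gcd_prime_pow_dvd_of_lt hp hd hdN)
    exact hy (hxz ▸ hc.zpow_left z)
  have hN : 0 < p ^ (k - 1 + 1) := pow_pos hp.pos _
  have : Nonempty (Fin (p ^ (k - 1 + 1))) := ⟨⟨0, hN⟩⟩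
  have hclique := card_le_of_hasCliqueNum_noncyclicGraph hω
    (pairwise_not_commute_of_not_commute_pow (fun hc ↦ hy (hc.pow_left _)) hsmall)
  have hk : p ^ k ≤ p ^ (k - 1 + 1) := Nat.pow_le_pow_right hp.pos (by omega)
  simp only [Fintype.card_option, Fintype.card_fin] at hclique
  omega

theorem pPow_mem_center_of_cliqueNum_between
    {G : Type*} [Group G] [Finite G] (hcyc : cyclicizer G = {1})
    (n : ℕ) (hω : hasCliqueNum (noncyclicGraph G) n)
    (p k : ℕ) (hp : p.Prime) (h1 : p ^ (k - 1) < n) (h2 : n ≤ p ^ k)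
    (x : G) (hx : ∃ m, orderOf x = p ^ m) :
    x ^ (p ^ (k - 1)) ∈ Subgroup.center G :=
  pPow_mem_center_of_cliqueNum_between_general n hω p k hp h2 x hx
end

section
/- Let G be a finite group with Cyc(G) = 1 and suppose the clique number of the non-cyclic graph of G is at most p for some prime p. Then G has no non-trivial p-element; i.e., p does not divide |G|. -/
/-!
If `z` has prime order `p` and `⟨z, y⟩` is not cyclic, then `z` together with the elements
`z ^ i * y`, `0 ≤ i < p`, is a clique of size `p + 1` in the non-cyclic graph: the quotient of two
distinct `z ^ i * y` is a nontrivial power of `z`, hence generates `⟨z⟩`, so any two of them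
generate a group containing `⟨z, y⟩`. When `Cyc(G) = 1` every element of order `p` has such a
partner `y`, so a clique number at most `p` rules out elements of order `p`; Cauchy's theorem then
gives `p ∤ |G|`, which excludes all nontrivial `p`-elements.
-/

open Subgroup

lemma cliqueFree_of_hasCliqueNum {V : Type*} {Γ : SimpleGraph V} {n : ℕ}
    (hω : hasCliqueNum Γ n) : Γ.CliqueFree (n + 1) := fun t ht => by
  have := hω.2 t ht.isClique
  rw [ht.card_eq] at this
  omega

section NoncyclicGraph

variable {G : Type*} [Group G]

lemma closure_pair_pow_mul_right (z y : G) (i : ℕ) :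
    closure {z, z ^ i * y} = closure {z, y} := by
  have hz : z ∈ closure {z, y} := subset_closure (by simp)
  have hz' : z ∈ closure {z, z ^ i * y} := subset_closure (by simp)
  have hy : y ∈ closure {z, y} := subset_closure (by simp)
  have hy' : z ^ i * y ∈ closure {z, z ^ i * y} := subset_closure (by simp)
  refine le_antisymm ?_ ?_ <;> rw [closure_le, Set.insert_subset_iff, Set.singleton_subset_iff]
  · exact ⟨hz, mul_mem (pow_mem hz i) hy⟩
  · refine ⟨hz', ?_⟩
    simpa using mul_mem (inv_mem (pow_mem hz' i)) hy'

lemma closure_pair_le_closure_pow_mul_pair {p : ℕ} (hp : p.Prime) {z : G} (hz : orderOf z = p)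
    (y : G) {i j : ℕ} (hji : j < i) (hi : i < p) :
    closure {z, y} ≤ closure {z ^ i * y, z ^ j * y} := by
  set K := closure ({z ^ i * y, z ^ j * y} : Set G)
  have hiK : z ^ i * y ∈ K := subset_closure (by simp)
  have hjK : z ^ j * y ∈ K := subset_closure (by simp)
  have hdiff : z ^ (i - j) ∈ K := by
    have : z ^ (i - j) = (z ^ i * y) * (z ^ j * y)⁻¹ := by
      rw [mul_inv_rev, mul_assoc, mul_inv_cancel_left, ← pow_sub z hji.le]
    exact this ▸ mul_mem hiK (inv_mem hjK)
  have hzK : z ∈ K := by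
    have hcop : (i - j).Coprime (orderOf z) :=
      hz ▸ (hp.coprime_iff_not_dvd.2 (Nat.not_dvd_of_pos_of_lt (by omega) (by omega))).symm
    exact (zpowers_le.2 hdiff) (mem_zpowers_pow_iff.2 hcop)
  rw [← closure_pair_pow_mul_right z y i, closure_le, Set.insert_subset_iff,
    Set.singleton_subset_iff]
  exact ⟨hzK, hiK⟩

lemma pairwise_not_isCyclic_closure_pow_mul {p : ℕ} (hp : p.Prime) {z y : G}
    (hz : orderOf z = p) (hy : ¬ IsCyclic (closure {z, y})) :
    ((z ^ · * y) '' Set.Iio p).Pairwise fun a b => ¬ IsCyclic (closure {a, b}) := by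
  rintro _ ⟨i, hi, rfl⟩ _ ⟨j, hj, rfl⟩ hne hcyc
  have hij : i ≠ j := fun h => hne (h ▸ rfl)
  rcases hij.lt_or_gt with h | h
  · rw [Set.pair_comm] at hcyc
    exact hy (isCyclic_of_le (closure_pair_le_closure_pow_mul_pair hp hz y h hj))
  · exact hy (isCyclic_of_le (closure_pair_le_closure_pow_mul_pair hp hz y h hi))

lemma exists_pairwise_not_isCyclic_closure_of_orderOf_eq_prime {p : ℕ} (hp : p.Prime)
    {z y : G} (hz : orderOf z = p) (hy : ¬ IsCyclic (closure {z, y})) :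
    ∃ s : Finset G, s.card = p + 1 ∧
      (s : Set G).Pairwise fun a b => ¬ IsCyclic (closure {a, b}) := by
  classical
  have hz_notMem : z ∉ (Finset.range p).image (z ^ · * y) := by
    simp only [Finset.mem_image, Finset.mem_range, not_exists, not_and]
    intro i _ hi
    apply hy
    rw [← closure_pair_pow_mul_right z y i, hi, Set.pair_eq_singleton, ← zpowers_eq_closure]
    infer_instance
  have hinj : Set.InjOn (z ^ · * y) (Finset.range p) := fun i hi j hj hij =>
    pow_injOn_Iio_orderOf (by simpa [hz] using hi) (by simpa [hz] using hj) (mul_right_cancel hij)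
  refine ⟨insert z ((Finset.range p).image (z ^ · * y)), ?_, ?_⟩
  · rw [Finset.card_insert_of_notMem hz_notMem, Finset.card_image_of_injOn hinj,
      Finset.card_range]
  · rw [Finset.coe_insert, Finset.coe_image, Finset.coe_range, Set.pairwise_insert]
    refine ⟨pairwise_not_isCyclic_closure_pow_mul hp hz hy, ?_⟩
    rintro _ ⟨i, -, rfl⟩ -
    have h : ¬ IsCyclic (closure {z, z ^ i * y}) := by rwa [closure_pair_pow_mul_right]
    exact ⟨h, by rwa [Set.pair_comm]⟩

lemma exists_isNClique_noncyclicGraph {s : Finset G}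
    (hs : (s : Set G).Pairwise fun a b => ¬ IsCyclic (closure {a, b})) (hcard : 1 < s.card) :
    ∃ t, (noncyclicGraph G).IsNClique s.card t := by
  classical
  have hmem : ∀ x ∈ s, x ∉ cyclicizer G := fun x hx hxc => by
    obtain ⟨y, hy, hyx⟩ := Finset.exists_mem_ne hcard x
    exact hs hx hy hyx.symm (hxc y)
  refine ⟨s.subtype (· ∉ cyclicizer G), ⟨?_, ?_⟩⟩
  · intro a ha b hb hab
    exact ⟨hab, hs (Finset.mem_subtype.1 ha) (Finset.mem_subtype.1 hb)
      (Subtype.val_injective.ne hab)⟩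
  · rw [Finset.card_subtype, Finset.filter_true_of_mem hmem]

lemma not_cliqueFree_noncyclicGraph_of_orderOf_eq_prime {p : ℕ} (hp : p.Prime) {z : G}
    (hz : orderOf z = p) (hzc : z ∉ cyclicizer G) :
    ¬ (noncyclicGraph G).CliqueFree (p + 1) := by
  obtain ⟨y, hy⟩ : ∃ y, ¬ IsCyclic (closure {z, y}) := by simpa [cyclicizer] using hzc
  obtain ⟨s, hcard, hs⟩ := exists_pairwise_not_isCyclic_closure_of_orderOf_eq_prime hp hz hy
  obtain ⟨t, ht⟩ := exists_isNClique_noncyclicGraph hs (by have := hp.pos; omega)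
  exact fun hfree => hfree t (hcard ▸ ht)

end NoncyclicGraph

theorem no_pElement_of_cliqueNum_le_p
    {G : Type*} [Group G] [Finite G] (hcyc : cyclicizer G = {1})
    (n : ℕ) (hω : hasCliqueNum (noncyclicGraph G) n)
    (p : ℕ) (hp : p.Prime) (hn : n ≤ p) :
    (∀ x : G, (∃ m, orderOf x = p ^ m) → x = 1) ∧ ¬ p ∣ Nat.card G := by
  have : Fact p.Prime := ⟨hp⟩
  have hdvd : ¬ p ∣ Nat.card G := by
    intro hdvd
    obtain ⟨z, hz⟩ := exists_prime_orderOf_dvd_card' p hdvd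
    have hzc : z ∉ cyclicizer G := by
      rw [hcyc, Set.mem_singleton_iff]
      rintro rfl
      exact hp.ne_one (orderOf_one.symm.trans hz).symm
    exact not_cliqueFree_noncyclicGraph_of_orderOf_eq_prime hp hz hzc
      ((cliqueFree_of_hasCliqueNum hω).mono (by omega))
  refine ⟨fun x ⟨m, hm⟩ => ?_, hdvd⟩
  cases m with
  | zero => exact orderOf_eq_one_iff.1 (by simpa using hm)
  | succ m =>
    exact absurd ((dvd_pow_self p m.succ_ne_zero).trans (hm ▸ orderOf_dvd_natCard x)) hdvd
end

section
/- Let G be a non-locally-cyclic group. Then the clique number of the non-cyclic graph of G equals 3 if and only if G/Cyc(G) ≅ Z_2 ⊕ Z_2. -/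
/-! If `a⁻¹ b ∈ Cyc(G)` then `⟨a, b⟩ = ⟨a, a⁻¹ b⟩` is cyclic, so colouring each vertex by its coset
of `N = Cyc(G)` is a proper colouring with the `|G/N| - 1` nontrivial cosets; for the Klein
four-group this bounds cliques by `3`. Conversely, without a 4-clique every square lies in `Cyc(G)`
(otherwise `a, ag, a²g, g` is a 4-clique), so `G/N` has exponent two. In a cyclic group `⟨c⟩` every
element then lies in `N` or in `cN`, hence representatives of distinct nontrivial cosets are
adjacent and `|G/N| - 1 ≤ 3`. A non-cyclic pair `⟨x, y⟩` gives the 3-clique `x, y, xy`, forcing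
`|G/N| = 4`. -/

open Subgroup

theorem Finite.card_subtype_ne_add_one {α : Type*} {a : α} [Finite {x : α // x ≠ a}] :
    Nat.card {x : α // x ≠ a} + 1 = Nat.card α := by
  classical
  rw [← Nat.card_congr (Equiv.optionSubtypeNe a), Finite.card_option]

theorem IsKleinFour.of_card_eq_four_of_mul_self {Q : Type*} [Group Q] (hcard : Nat.card Q = 4)
    (hsq : ∀ q : Q, q * q = 1) : IsKleinFour Q := by
  have : Finite Q := Nat.finite_of_card_ne_zero (by omega)
  have : Nontrivial Q := Finite.one_lt_card_iff_nontrivial.mp (by omega)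
  refine ⟨hcard, (Monoid.exponent_eq_prime_iff Nat.prime_two).mpr fun q hq => ?_⟩
  exact orderOf_eq_prime (by rw [pow_two, hsq]) hq

instance : IsKleinFour (Multiplicative (ZMod 2) × Multiplicative (ZMod 2)) where
  card_four := by simp
  exponent_two := by simp [Monoid.exponent_prod]

namespace Subgroup

variable {G : Type*} [Group G]

theorem closure_pair_le_iff {a b : G} {H : Subgroup G} :
    closure {a, b} ≤ H ↔ a ∈ H ∧ b ∈ H := by
  rw [closure_le, Set.pair_subset_iff, SetLike.mem_coe, SetLike.mem_coe]

theorem mem_closure_pair_left (a b : G) : a ∈ closure {a, b} :=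
  subset_closure (Set.mem_insert a {b})

theorem mem_closure_pair_right (a b : G) : b ∈ closure {a, b} :=
  subset_closure (Set.mem_insert_of_mem a rfl)

theorem closure_pair_mul_left (a b : G) : closure {a, a * b} = closure {a, b} := by
  refine le_antisymm (closure_pair_le_iff.mpr ⟨mem_closure_pair_left a b,
    mul_mem (mem_closure_pair_left a b) (mem_closure_pair_right a b)⟩)
    (closure_pair_le_iff.mpr ⟨mem_closure_pair_left _ _, ?_⟩)
  simpa using mul_mem (inv_mem (mem_closure_pair_left a (a * b))) (mem_closure_pair_right a (a * b))

theorem closure_pair_mul_right (a b : G) : closure {b, a * b} = closure {a, b} := by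
  refine le_antisymm (closure_pair_le_iff.mpr ⟨mem_closure_pair_right a b,
    mul_mem (mem_closure_pair_left a b) (mem_closure_pair_right a b)⟩)
    (closure_pair_le_iff.mpr ⟨?_, mem_closure_pair_left _ _⟩)
  simpa using mul_mem (mem_closure_pair_right b (a * b)) (inv_mem (mem_closure_pair_left b (a * b)))

end Subgroup

namespace SimpleGraph

variable {V : Type*} {Γ : SimpleGraph V}

theorem hasCliqueNum_iff_cliqueFree {n : ℕ} :
    hasCliqueNum Γ n ↔ ¬ Γ.CliqueFree n ∧ Γ.CliqueFree (n + 1) := by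
  refine and_congr (by simp [CliqueFree]) ⟨fun h t ht => ?_, fun h s hs => ?_⟩
  · have := h t ht.isClique
    rw [ht.card_eq] at this
    omega
  · by_contra! hlt
    obtain ⟨t, hts, ht⟩ := Finset.exists_subset_card_eq (Nat.succ_le_of_lt hlt)
    exact h t ⟨hs.subset (by exact_mod_cast hts), ht⟩

theorem Coloring.cliqueFree_of_natCard_lt {α : Type*} [Finite α] (C : Γ.Coloring α) {m : ℕ}
    (hm : Nat.card α < m) : Γ.CliqueFree m := by
  have := Fintype.ofFinite α
  exact C.colorable.cliqueFree (by rwa [← Nat.card_eq_fintype_card])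

theorem finite_and_natCard_lt_of_cliqueFree_top {n : ℕ} (h : (⊤ : SimpleGraph V).CliqueFree n) :
    Finite V ∧ Nat.card V < n := by
  have hcard : ∀ t : Finset V, t.card ≠ n := fun t ht => h t ⟨IsClique.top _, ht⟩
  have : Finite V := by
    by_contra hinf
    rw [not_finite_iff_infinite] at hinf
    obtain ⟨t, ht⟩ := Infinite.exists_subset_card_eq V n
    exact hcard t ht
  refine ⟨this, ?_⟩
  have := Fintype.ofFinite V
  by_contra! hle
  obtain ⟨t, -, ht⟩ := Finset.exists_subset_card_eq (s := (Finset.univ : Finset V)) (n := n)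
    (by rwa [Finset.card_univ, ← Nat.card_eq_fintype_card])
  exact hcard t ht

end SimpleGraph

section Cyclicizer

variable {G : Type*} [Group G]

theorem exists_not_isCyclic_closure_pair (h : ¬ IsLocallyCyclic G) :
    ∃ a b : G, ¬ IsCyclic (closure {a, b}) := by
  contrapose! h
  rintro _ ⟨S, rfl⟩
  suffices ∀ S : Finset G, ∃ g, closure (S : Set G) = zpowers g by
    obtain ⟨g, hg⟩ := this S
    rw [hg]
    infer_instance
  classical
  intro S
  induction S using Finset.induction_on with
  | empty => exact ⟨1, by simp⟩
  | insert a S _ ih =>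
    obtain ⟨g, hg⟩ := ih
    obtain ⟨c, hc⟩ := (closure {a, g}).isCyclic_iff_exists_zpowers_eq_top.mp (h a g)
    refine ⟨c, ?_⟩
    rw [hc, Finset.coe_insert, Set.insert_eq, Subgroup.closure_union, hg, zpowers_eq_closure,
      ← Subgroup.closure_union, ← Set.insert_eq]

theorem notMem_cyclicizer_left {a b : G} (h : ¬ IsCyclic (closure {a, b})) :
    a ∉ cyclicizer G :=
  fun ha => h (ha b)

theorem notMem_cyclicizer_right {a b : G} (h : ¬ IsCyclic (closure {a, b})) :
    b ∉ cyclicizer G :=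
  notMem_cyclicizer_left (a := b) (b := a) (by rwa [Set.pair_comm])

theorem isCyclic_closure_pair_of_inv_mul_mem_cyclicizer {a b : G} (h : a⁻¹ * b ∈ cyclicizer G) :
    IsCyclic (closure {a, b}) := by
  have hab := closure_pair_mul_left a (a⁻¹ * b)
  rw [mul_inv_cancel_left] at hab
  rw [hab, Set.pair_comm]
  exact h a

theorem noncyclicGraph_adj_iff {u v : {g : G // g ∉ cyclicizer G}} :
    (noncyclicGraph G).Adj u v ↔ ¬ IsCyclic (closure {(u : G), (v : G)}) := by
  refine ⟨And.right, fun h => ⟨?_, h⟩⟩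
  rintro rfl
  rw [Set.pair_eq_singleton, ← zpowers_eq_closure] at h
  exact h inferInstance

theorem not_cliqueFree_three {a b c : G} (hab : ¬ IsCyclic (closure {a, b}))
    (hac : ¬ IsCyclic (closure {a, c})) (hbc : ¬ IsCyclic (closure {b, c})) :
    ¬ (noncyclicGraph G).CliqueFree 3 := by
  classical
  refine (SimpleGraph.is3Clique_triple_iff (a := ⟨a, notMem_cyclicizer_left hab⟩)
    (b := ⟨b, notMem_cyclicizer_right hab⟩) (c := ⟨c, notMem_cyclicizer_right hac⟩)).mpr
    ?_ |>.not_cliqueFree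
  simp only [noncyclicGraph_adj_iff]
  exact ⟨hab, hac, hbc⟩

theorem not_cliqueFree_four {a b c d : G} (hab : ¬ IsCyclic (closure {a, b}))
    (hac : ¬ IsCyclic (closure {a, c})) (had : ¬ IsCyclic (closure {a, d}))
    (hbc : ¬ IsCyclic (closure {b, c})) (hbd : ¬ IsCyclic (closure {b, d}))
    (hcd : ¬ IsCyclic (closure {c, d})) :
    ¬ (noncyclicGraph G).CliqueFree 4 := by
  classical
  refine ((SimpleGraph.is3Clique_triple_iff (a := ⟨b, notMem_cyclicizer_right hab⟩)
    (b := ⟨c, notMem_cyclicizer_right hac⟩) (c := ⟨d, notMem_cyclicizer_right had⟩)).mpr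
    ?_ |>.insert (a := ⟨a, notMem_cyclicizer_left hab⟩) ?_).not_cliqueFree
  all_goals simp only [noncyclicGraph_adj_iff, Finset.mem_insert, Finset.mem_singleton,
    forall_eq_or_imp, forall_eq]
  · exact ⟨hbc, hbd, hcd⟩
  · exact ⟨hab, hac, had⟩

theorem not_cliqueFree_three_of_not_isLocallyCyclic (h : ¬ IsLocallyCyclic G) :
    ¬ (noncyclicGraph G).CliqueFree 3 := by
  obtain ⟨a, b, hab⟩ := exists_not_isCyclic_closure_pair h
  refine not_cliqueFree_three (c := a * b) hab ?_ ?_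
  · rwa [closure_pair_mul_left]
  · rwa [closure_pair_mul_right]

theorem mul_self_mem_cyclicizer (h4 : (noncyclicGraph G).CliqueFree 4) (a : G) :
    a * a ∈ cyclicizer G := by
  intro g
  by_cases hag : IsCyclic (closure {a, g})
  · exact isCyclic_of_le (H' := closure {a, g}) (closure_pair_le_iff.mpr
      ⟨mul_mem (mem_closure_pair_left a g) (mem_closure_pair_left a g), mem_closure_pair_right a g⟩)
  have : IsCyclic (closure {a * (a * g), g}) := by
    by_contra hcg
    -- Every pair among `a, ag, a²g, g` other than `{a²g, g}` generates `⟨a, g⟩`.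
    refine not_cliqueFree_four (a := a) (b := a * g) (c := a * (a * g)) (d := g) ?_ ?_ hag ?_ ?_
      hcg h4
    · rwa [closure_pair_mul_left]
    · rwa [closure_pair_mul_left, closure_pair_mul_left]
    · rwa [closure_pair_mul_right, closure_pair_mul_left]
    · rwa [Set.pair_comm, closure_pair_mul_right]
  refine isCyclic_of_le (H' := closure {a * (a * g), g})
    (closure_pair_le_iff.mpr ⟨?_, mem_closure_pair_right _ g⟩)
  simpa [mul_assoc] using mul_mem (mem_closure_pair_left (a * (a * g)) g)
    (inv_mem (mem_closure_pair_right (a * (a * g)) g))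

end Cyclicizer

section Quotient

variable {G : Type*} [Group G] {N : Subgroup G} [N.Normal]

theorem QuotientGroup.mk_eq_one_or_of_isCyclic_closure_pair (hsq : ∀ g : G, g * g ∈ N) {a b : G}
    (h : IsCyclic (closure {a, b})) :
    (a : G ⧸ N) = 1 ∨ (b : G ⧸ N) = 1 ∨ (a : G ⧸ N) = b := by
  obtain ⟨c, hc⟩ := (closure {a, b}).isCyclic_iff_exists_zpowers_eq_top.mp h
  have hc2 : (c : G ⧸ N) ^ 2 = 1 := by
    rw [pow_two, ← QuotientGroup.mk_mul, QuotientGroup.eq_one_iff]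
    exact hsq c
  have key : ∀ x ∈ closure {a, b}, (x : G ⧸ N) = 1 ∨ (x : G ⧸ N) = c := by
    rw [← hc]
    rintro _ ⟨m, rfl⟩
    obtain ⟨k, rfl | rfl⟩ := Int.even_or_odd' m
    · simp [QuotientGroup.mk_zpow, zpow_mul, hc2]
    · simp [QuotientGroup.mk_zpow, zpow_add, zpow_mul, hc2]
  rcases key a (mem_closure_pair_left a b) with ha | ha <;>
    rcases key b (mem_closure_pair_right a b) with hb | hb
  all_goals simp [ha, hb]

variable (hN : (N : Set G) = cyclicizer G)
include hN

def cosetColoring : (noncyclicGraph G).Coloring {q : G ⧸ N // q ≠ 1} :=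
  SimpleGraph.Coloring.mk
    (fun v => ⟨v, fun h => v.2 ((Set.ext_iff.mp hN _).mp ((QuotientGroup.eq_one_iff _).mp h))⟩)
    (fun huv heq => huv.2 <| isCyclic_closure_pair_of_inv_mul_mem_cyclicizer <|
      (Set.ext_iff.mp hN _).mp (QuotientGroup.eq.mp (congrArg Subtype.val heq)))

noncomputable def cosetRepEmbedding (hsq : ∀ g : G, g * g ∈ N) :
    (⊤ : SimpleGraph {q : G ⧸ N // q ≠ 1}) ↪g noncyclicGraph G where
  toFun q := ⟨q.1.out, fun h => q.2 <| by
    rw [← QuotientGroup.out_eq' q.1, QuotientGroup.eq_one_iff]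
    exact (Set.ext_iff.mp hN _).mpr h⟩
  inj' p q h := Subtype.ext <| by
    simpa using congrArg (fun v : {g : G // g ∉ cyclicizer G} => (v : G ⧸ N)) h
  map_rel_iff' {p q} := by
    refine ⟨fun h hpq => h.ne (by rw [hpq]), fun hpq => noncyclicGraph_adj_iff.mpr fun hc => ?_⟩
    rcases QuotientGroup.mk_eq_one_or_of_isCyclic_closure_pair (a := p.1.out) (b := q.1.out) hsq hc
      with h | h | h <;> simp only [QuotientGroup.out_eq'] at h
    exacts [p.2 h, q.2 h, hpq (Subtype.ext h)]

end Quotient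

theorem cliqueNum_eq_three_iff_quotient_klein
    {G : Type*} [Group G] (h : ¬ IsLocallyCyclic G)
    (N : Subgroup G) [N.Normal] (hN : (N : Set G) = cyclicizer G) :
    hasCliqueNum (noncyclicGraph G) 3 ↔
      Nonempty ((G ⧸ N) ≃* Multiplicative (ZMod 2) × Multiplicative (ZMod 2)) := by
  have h3 := not_cliqueFree_three_of_not_isLocallyCyclic h
  rw [SimpleGraph.hasCliqueNum_iff_cliqueFree, and_iff_right h3]
  constructor
  · intro h4
    have hsq (g : G) : g * g ∈ N := (Set.ext_iff.mp hN _).mpr (mul_self_mem_cyclicizer h4 g)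
    obtain ⟨_, hlt⟩ := SimpleGraph.finite_and_natCard_lt_of_cliqueFree_top
      (h4.comap (cosetRepEmbedding hN hsq).isContained)
    have hge : 3 ≤ Nat.card {q : G ⧸ N // q ≠ 1} := by
      by_contra! hlt3
      exact h3 ((cosetColoring hN).cliqueFree_of_natCard_lt hlt3)
    have hcard := Finite.card_subtype_ne_add_one (a := (1 : G ⧸ N))
    have := IsKleinFour.of_card_eq_four_of_mul_self (Q := G ⧸ N) (by omega)
      (fun q => QuotientGroup.induction_on q fun g => (QuotientGroup.eq_one_iff _).mpr (hsq g))
    exact IsKleinFour.nonempty_mulEquiv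
  · rintro ⟨e⟩
    have : Finite (G ⧸ N) := Finite.of_equiv _ e.symm.toEquiv
    have h4 : Nat.card (G ⧸ N) = 4 := (Nat.card_congr e.toEquiv).trans IsKleinFour.card_four
    have hcard := Finite.card_subtype_ne_add_one (a := (1 : G ⧸ N))
    exact (cosetColoring hN).cliqueFree_of_natCard_lt (by omega)
end

section
/- Let p be a prime and G a group of order p^n (n > 1) and exponent p. Then the clique number of the non-cyclic graph of G equals (p^n − 1)/(p − 1), i.e., the number of subgroups of G of order p. -/
/-!
In a group of exponent `p` every nontrivial element has order `p`, so two nontrivial elements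
generate a cyclic subgroup exactly when they generate the same subgroup of order `p`. A group of
order `p ^ n` with `n > 1` and exponent `p` is not cyclic, so its cyclicizer is trivial and the
non-cyclic graph is the complete multipartite graph whose parts are the generator sets of the
subgroups of order `p`; its clique number is the number of parts. The parts partition `G \ {1}`
into blocks of size `p - 1`, which gives the count `(p ^ n - 1) / (p - 1)`.
-/

theorem hasCliqueNum_of_adj_iff_ne {V β : Type*} [Finite β] (Γ : SimpleGraph V) (f : V → β)
    (hf : Function.Surjective f) (hadj : ∀ x y, Γ.Adj x y ↔ f x ≠ f y) :
    hasCliqueNum Γ (Nat.card β) := by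
  classical
  have := Fintype.ofFinite β
  rw [Nat.card_eq_fintype_card, ← Finset.card_univ]
  refine ⟨⟨Finset.univ.image (Function.surjInv hf), ?_, ?_⟩, fun s hs => ?_⟩
  · simp only [Finset.coe_image, Finset.coe_univ, Set.image_univ]
    rintro _ ⟨a, rfl⟩ _ ⟨b, rfl⟩ hab
    rw [hadj, Function.surjInv_eq hf, Function.surjInv_eq hf]
    rintro rfl
    exact hab rfl
  · exact Finset.card_image_of_injective _ (Function.injective_surjInv hf)
  · refine Finset.card_le_card_of_injOn f (fun _ _ => Finset.mem_coe.mpr (Finset.mem_univ _)) ?_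
    intro a ha b hb hfab
    by_contra hne
    exact (hadj a b).mp (hs ha hb hne) hfab

open Subgroup

section

variable {G : Type*} [Group G]

theorem closure_pair_eq_zpowers_of_mem {x y : G} (h : y ∈ zpowers x) :
    closure {x, y} = zpowers x := by
  rw [Set.insert_eq, Subgroup.closure_union, ← zpowers_eq_closure, ← zpowers_eq_closure,
    sup_eq_left.mpr (zpowers_le.mpr h)]

theorem one_mem_cyclicizer : (1 : G) ∈ cyclicizer G := fun y => by
  rw [closure_insert_one, ← zpowers_eq_closure]
  infer_instance

theorem not_isCyclic_of_pow_eq_one {p n : ℕ} (hp : 1 < p) (hexp : ∀ g : G, g ^ p = 1)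
    (hcard : Nat.card G = p ^ n) (hn : 1 < n) : ¬ IsCyclic G := by
  intro hcyc
  have hdvd : p ^ n ∣ p ^ 1 := by
    rw [← hcard, ← IsCyclic.exponent_eq_card, pow_one]
    exact Monoid.exponent_dvd_of_forall_pow_eq_one hexp
  exact absurd ((Nat.pow_dvd_pow_iff_le_right hp).mp hdvd) (by omega)

variable {p : ℕ} [hp : Fact p.Prime]

theorem card_zpowers_eq_prime (hexp : ∀ g : G, g ^ p = 1) {g : G} (hg : g ≠ 1) :
    Nat.card (zpowers g) = p := by
  rw [Nat.card_zpowers, orderOf_eq_prime (hexp g) hg]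

theorem zpowers_eq_of_mem_of_card_eq (hexp : ∀ g : G, g ^ p = 1) {g : G} (hg : g ≠ 1)
    {H : Subgroup G} (hH : Nat.card H = p) (hgH : g ∈ H) : zpowers g = H := by
  have : Finite H := Nat.finite_of_card_ne_zero (hH ▸ hp.out.ne_zero)
  refine eq_of_le_of_card_ge (zpowers_le.mpr hgH) ?_
  rw [hH, card_zpowers_eq_prime hexp hg]

theorem zpowers_eq_iff_mem (hexp : ∀ g : G, g ^ p = 1) {g : G} (hg : g ≠ 1)
    {H : Subgroup G} (hH : Nat.card H = p) : zpowers g = H ↔ g ∈ H :=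
  ⟨fun h => h ▸ mem_zpowers g, zpowers_eq_of_mem_of_card_eq hexp hg hH⟩

theorem isCyclic_closure_pair_iff_s14 (hexp : ∀ g : G, g ^ p = 1) {x y : G} (hx : x ≠ 1)
    (hy : y ≠ 1) : IsCyclic (closure {x, y}) ↔ zpowers x = zpowers y := by
  constructor
  · intro hcyc
    obtain ⟨z, hz⟩ := (closure {x, y}).isCyclic_iff_exists_zpowers_eq_top.mp hcyc
    have hxz : x ∈ zpowers z := hz ▸ subset_closure (Set.mem_insert x {y})
    have hyz : y ∈ zpowers z := hz ▸ subset_closure (Set.mem_insert_of_mem x rfl)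
    have hz1 : z ≠ 1 := by
      rintro rfl
      exact hx (by simpa using hxz)
    have hzp := card_zpowers_eq_prime hexp hz1
    rw [zpowers_eq_of_mem_of_card_eq hexp hx hzp hxz,
      zpowers_eq_of_mem_of_card_eq hexp hy hzp hyz]
  · intro h
    rw [closure_pair_eq_zpowers_of_mem (h ▸ mem_zpowers y)]
    infer_instance

theorem cyclicizer_eq_singleton_one (hexp : ∀ g : G, g ^ p = 1) (hG : ¬ IsCyclic G) :
    cyclicizer G = {1} := by
  refine Set.eq_singleton_iff_unique_mem.mpr ⟨one_mem_cyclicizer, fun x hx => ?_⟩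
  by_contra hx1
  refine hG (isCyclic_iff_exists_zpowers_eq_top.mpr ⟨x, (eq_top_iff' _).mpr fun y => ?_⟩)
  rcases eq_or_ne y 1 with rfl | hy1
  · exact one_mem _
  · exact (isCyclic_closure_pair_iff_s14 hexp hx1 hy1).mp (hx y) ▸ mem_zpowers y

theorem card_subgroups_card_eq_prime_mul [Finite G] (hexp : ∀ g : G, g ^ p = 1) :
    Nat.card {H : Subgroup G // Nat.card H = p} * (p - 1) = Nat.card G - 1 := by
  classical
  have := Fintype.ofFinite G
  have := Fintype.ofFinite (Subgroup G)
  set t := Finset.univ.filter fun H : Subgroup G => Nat.card H = p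
  have hmaps : Set.MapsTo zpowers (Finset.univ.erase (1 : G) : Set G) t := fun g hg => by
    simpa [t] using card_zpowers_eq_prime hexp (Finset.mem_erase.mp hg).1
  have hfiber : ∀ H ∈ t, {g ∈ Finset.univ.erase (1 : G) | zpowers g = H}.card = p - 1 := by
    intro H hH
    have hHp : Nat.card H = p := (Finset.mem_filter.mp hH).2
    have : {g ∈ Finset.univ.erase (1 : G) | zpowers g = H} =
        (Finset.univ.filter (· ∈ H)).erase 1 := by
      ext g
      simp only [Finset.mem_filter, Finset.mem_erase, Finset.mem_univ, and_true, true_and]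
      exact and_congr_right fun hg => zpowers_eq_iff_mem hexp hg hHp
    rw [this, Finset.card_erase_of_mem (by simp), ← hHp, Nat.card_eq_fintype_card,
      Fintype.card_subtype]
  rw [Nat.card_eq_fintype_card, Fintype.card_subtype, Nat.card_eq_fintype_card,
    ← Finset.card_univ, ← Finset.card_erase_of_mem (Finset.mem_univ 1),
    Finset.card_eq_sum_card_fiberwise hmaps, Finset.sum_congr rfl hfiber, Finset.sum_const,
    smul_eq_mul]

end

theorem cliqueNum_of_exponent_p_group
    {G : Type*} [Group G] [Finite G] (p n : ℕ) (hp : p.Prime) (hn : 1 < n)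
    (hcard : Nat.card G = p ^ n) (hexp : ∀ g : G, g ^ p = 1) :
    hasCliqueNum (noncyclicGraph G) ((p ^ n - 1) / (p - 1)) ∧
      (p ^ n - 1) / (p - 1) = Nat.card {H : Subgroup G // Nat.card H = p} := by
  have : Fact p.Prime := ⟨hp⟩
  have hcyc :=
    cyclicizer_eq_singleton_one hexp (not_isCyclic_of_pow_eq_one hp.one_lt hexp hcard hn)
  have hcount : (p ^ n - 1) / (p - 1) = Nat.card {H : Subgroup G // Nat.card H = p} := by
    rw [← hcard, ← card_subgroups_card_eq_prime_mul hexp,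
      Nat.mul_div_cancel _ (Nat.sub_pos_of_lt hp.one_lt)]
  have hvert (v : {g : G // g ∉ cyclicizer G}) : (v : G) ≠ 1 := by simpa [hcyc] using v.2
  let f (v : {g : G // g ∉ cyclicizer G}) : {H : Subgroup G // Nat.card H = p} :=
    ⟨zpowers v, card_zpowers_eq_prime hexp (hvert v)⟩
  have hf : Function.Surjective f := by
    rintro ⟨H, hH⟩
    obtain ⟨g, hgH, hg⟩ := H.bot_or_exists_ne_one.resolve_left fun h => by
      simp [h, hp.ne_one.symm] at hH
    exact ⟨⟨g, by simpa [hcyc] using hg⟩,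
      Subtype.ext (zpowers_eq_of_mem_of_card_eq hexp hg hH hgH)⟩
  have hadj (v w) : (noncyclicGraph G).Adj v w ↔ f v ≠ f w := by
    simp only [noncyclicGraph, isCyclic_closure_pair_iff_s14 hexp (hvert v) (hvert w), f, ne_eq,
      Subtype.ext_iff]
    exact and_iff_right_of_imp fun h hvw => h (hvw ▸ rfl)
  exact ⟨hcount ▸ hasCliqueNum_of_adj_iff_ne _ f hf hadj, hcount⟩
end

section
/- Let G and H be finite non-cyclic groups with gcd(|G|,|H|) = 1. If the clique numbers of the non-cyclic graphs of G and H are n and m respectively, then the clique number of the non-cyclic graph of G × H is at least nm. -/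
section

variable {G H : Type*} [Group G] [Group H]

theorem Subgroup.isCyclic_map (f : G →* H) (K : Subgroup G) [IsCyclic K] :
    IsCyclic (K.map f) :=
  isCyclic_of_surjective (f.subgroupMap K) (f.subgroupMap_surjective K)

theorem isCyclic_closure_pair_map (f : G →* H) {a b : G}
    (h : IsCyclic (Subgroup.closure {a, b} : Subgroup G)) :
    IsCyclic (Subgroup.closure {f a, f b} : Subgroup H) := by
  rw [← Set.image_pair, ← MonoidHom.map_closure]
  exact Subgroup.isCyclic_map f _

theorem isCyclic_closure_pair_fst {a c : G} {b d : H}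
    (h : IsCyclic (Subgroup.closure {(a, b), (c, d)} : Subgroup (G × H))) :
    IsCyclic (Subgroup.closure {a, c} : Subgroup G) :=
  isCyclic_closure_pair_map (MonoidHom.fst G H) (a := (a, b)) (b := (c, d)) h

theorem isCyclic_closure_pair_snd {a c : G} {b d : H}
    (h : IsCyclic (Subgroup.closure {(a, b), (c, d)} : Subgroup (G × H))) :
    IsCyclic (Subgroup.closure {b, d} : Subgroup H) :=
  isCyclic_closure_pair_map (MonoidHom.snd G H) (a := (a, b)) (b := (c, d)) h

theorem mem_cyclicizer_of_mk_mem_cyclicizer_prod {g : G} {h : H}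
    (hgh : (g, h) ∈ cyclicizer (G × H)) : g ∈ cyclicizer G :=
  fun y => isCyclic_closure_pair_fst (hgh (y, h))

def noncyclicGraph.prodVertexEmb (G H : Type*) [Group G] [Group H] :
    {g : G // g ∉ cyclicizer G} × {h : H // h ∉ cyclicizer H} ↪
      {p : G × H // p ∉ cyclicizer (G × H)} where
  toFun p := ⟨(p.1, p.2), fun hp => p.1.2 (mem_cyclicizer_of_mk_mem_cyclicizer_prod hp)⟩
  inj' := by
    rintro ⟨⟨a, _⟩, ⟨b, _⟩⟩ ⟨⟨c, _⟩, ⟨d, _⟩⟩ h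
    simp_all

@[simp]
theorem noncyclicGraph.coe_prodVertexEmb
    (p : {g : G // g ∉ cyclicizer G} × {h : H // h ∉ cyclicizer H}) :
    (prodVertexEmb G H p : G × H) = ((p.1 : G), (p.2 : H)) :=
  rfl

theorem noncyclicGraph.adj_prodVertexEmb {a c : {g : G // g ∉ cyclicizer G}}
    {b d : {h : H // h ∉ cyclicizer H}}
    (h : (noncyclicGraph G).Adj a c ∨ (noncyclicGraph H).Adj b d) :
    (noncyclicGraph (G × H)).Adj (prodVertexEmb G H (a, b)) (prodVertexEmb G H (c, d)) := by
  have hinj := (prodVertexEmb G H).injective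
  refine ⟨fun heq => ?_, fun hc => ?_⟩
  · obtain ⟨rfl, rfl⟩ := Prod.ext_iff.mp (hinj heq)
    rcases h with h | h <;> exact h.ne rfl
  · rw [coe_prodVertexEmb, coe_prodVertexEmb] at hc
    rcases h with ⟨-, hnc⟩ | ⟨-, hnc⟩
    · exact hnc (isCyclic_closure_pair_fst hc)
    · exact hnc (isCyclic_closure_pair_snd hc)

theorem noncyclicGraph.isNClique_prod {n m : ℕ} {s : Finset {g : G // g ∉ cyclicizer G}}
    {t : Finset {h : H // h ∉ cyclicizer H}} (hs : (noncyclicGraph G).IsNClique n s)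
    (ht : (noncyclicGraph H).IsNClique m t) :
    (noncyclicGraph (G × H)).IsNClique (n * m) ((s ×ˢ t).map (prodVertexEmb G H)) := by
  refine ⟨?_, by rw [Finset.card_map, Finset.card_product, hs.card_eq, ht.card_eq]⟩
  simp only [Finset.coe_map, Finset.coe_product]
  rintro _ ⟨⟨a, b⟩, ⟨ha, hb⟩, rfl⟩ _ ⟨⟨c, d⟩, ⟨hc, hd⟩, rfl⟩ hne
  apply adj_prodVertexEmb
  by_cases hac : a = c
  · subst hac
    exact Or.inr (ht.isClique hb hd fun hbd => hne (congrArg _ (congrArg _ hbd)))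
  · exact Or.inl (hs.isClique ha hc hac)

end

theorem cliqueNum_prod_ge_general
    {G H : Type*} [Group G] [Group H]
    (n m : ℕ) (hn : hasCliqueNum (noncyclicGraph G) n)
    (hm : hasCliqueNum (noncyclicGraph H) m)
    (N : ℕ) (hN : hasCliqueNum (noncyclicGraph (G × H)) N) :
    n * m ≤ N := by
  obtain ⟨⟨s, hs⟩, -⟩ := hn
  obtain ⟨⟨t, ht⟩, -⟩ := hm
  have hst := noncyclicGraph.isNClique_prod hs ht
  exact hst.card_eq ▸ hN.2 _ hst.isClique

theorem cliqueNum_prod_ge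
    {G H : Type*} [Group G] [Group H] [Finite G] [Finite H]
    (hG : ¬ IsCyclic G) (hH : ¬ IsCyclic H)
    (hcop : Nat.Coprime (Nat.card G) (Nat.card H))
    (n m : ℕ) (hn : hasCliqueNum (noncyclicGraph G) n)
    (hm : hasCliqueNum (noncyclicGraph H) m)
    (N : ℕ) (hN : hasCliqueNum (noncyclicGraph (G × H)) N) :
    n * m ≤ N :=
  cliqueNum_prod_ge_general n m hn hm N hN
end
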